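/- arXiv:2311.02208 — 4 statements merged into one kernel-verified Lean document; each statement's English description precedes it below -/
import Mathlib

section
/- Let K be a field of characteristic p, x transcendental over K, G ≤ (K,+) an additive subgroup, and (d_1^n)_{n<ω}, (d_2^n)_{n<ω} ⊆ K such that the family {d_1^n, d_2^m : n,m < ω} is 𝔽_p-linearly independent. Then (G + Σ_{n<ω} Span_{𝔽_p}(x·d_2^n − d_1^n)) ∩ K = G, and the sum G ⊕ ⨁_n Span_{𝔽_p}(x·d_2^n − d_1^n) is direct. -/
section aux

variable (p : ℕ) [Fact p.Prime] {L : Type*} [Field L] [CharP L p] [Algebra (ZMod p) L]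

lemma aux_smul_mem (K : Subfield L) (a : ZMod p) {y : L} (hy : y ∈ K) : a • y ∈ K := by
  rw [Algebra.smul_def]
  refine K.mul_mem ?_ hy
  rw [← ZMod.natCast_rightInverse a, map_natCast]
  exact natCast_mem K _

lemma aux_sum_mem (K : Subfield L) (c : ℕ →₀ ZMod p) (d : ℕ → L) (hd : ∀ n, d n ∈ K) :
    (c.sum fun n a => a • d n) ∈ K := by
  refine sum_mem fun i _ => aux_smul_mem p K _ (hd i)

/-- Key: if `a + x*b = 0` with `a, b ∈ K` and `x` transcendental over `K`, then `a = b = 0`. -/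
lemma aux_key (K : Subfield L) (x : L) (hx : Transcendental K x)
    {a b : L} (ha : a ∈ K) (hb : b ∈ K) (h : a + x * b = 0) : a = 0 ∧ b = 0 := by
  have hb0 : b = 0 := by
    by_contra hb0
    have hxK : x ∈ K := by
      have : x = -a * b⁻¹ := by
        rw [eq_mul_inv_iff_mul_eq₀ hb0]
        linear_combination h
      rw [this]
      exact K.mul_mem (K.neg_mem ha) (K.inv_mem hb)
    exact hx (isAlgebraic_algebraMap (⟨x, hxK⟩ : K))
  refine ⟨?_, hb0⟩
  simpa [hb0] using h

lemma aux_expand (x : L) (d1 d2 : ℕ → L) (c : ℕ →₀ ZMod p) :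
    (c.sum fun n a => a • (x * d2 n - d1 n)) =
      x * (c.sum fun n a => a • d2 n) - c.sum fun n a => a • d1 n := by
  rw [Finsupp.mul_sum, ← Finsupp.sum_sub]
  refine Finsupp.sum_congr fun n _ => ?_
  rw [smul_sub, mul_smul_comm]

lemma aux_indep (d1 d2 : ℕ → L) (hindep : LinearIndependent (ZMod p) (Sum.elim d1 d2))
    (c : ℕ →₀ ZMod p) (h : (c.sum fun n a => a • d2 n) = 0) : c = 0 := by
  have h2 : LinearIndependent (ZMod p) d2 := by
    have := hindep.comp Sum.inr Sum.inr_injective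
    simpa using this
  exact linearIndependent_iff.mp h2 c (by rw [Finsupp.linearCombination_apply]; exact h)

end aux

/-- `(G + Σ_n Span_{𝔽_p}(x·d₂ⁿ − d₁ⁿ)) ∩ K = G`, and the sum is direct,
when the family `{d₁ⁿ, d₂ᵐ}` is `𝔽_p`-linearly independent and `x` is
transcendental over `K`. -/
theorem span_inter_base_field_and_direct (p : ℕ) [Fact p.Prime]
    {L : Type*} [Field L] [CharP L p] [Algebra (ZMod p) L]
    (K : Subfield L) (x : L) (hx : Transcendental K x)
    (G : Submodule (ZMod p) L) (hGK : (G : Set L) ⊆ (K : Set L))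
    (d1 d2 : ℕ → L) (hd1K : ∀ n, d1 n ∈ K) (hd2K : ∀ n, d2 n ∈ K)
    (hindep : LinearIndependent (ZMod p) (Sum.elim d1 d2)) :
    (((G ⊔ ⨆ n : ℕ, Submodule.span (ZMod p) {x * d2 n - d1 n} :
        Submodule (ZMod p) L) : Set L) ∩ (K : Set L) = (G : Set L)) ∧
    (∀ g ∈ G, ∀ c : ℕ →₀ ZMod p,
      g + c.sum (fun n a => a • (x * d2 n - d1 n)) = 0 → g = 0 ∧ c = 0) := by
  constructor
  · apply Set.Subset.antisymm
    · rintro y ⟨hy1, hyK⟩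
      obtain ⟨g, hg, z, hz, rfl⟩ := Submodule.mem_sup.mp hy1
      rw [← Submodule.span_range_eq_iSup, Finsupp.mem_span_range_iff_exists_finsupp] at hz
      obtain ⟨c, rfl⟩ := hz
      rw [aux_expand] at hyK ⊢
      have hS1 : (c.sum fun n a => a • d1 n) ∈ K := aux_sum_mem p K c d1 hd1K
      have hS2 : (c.sum fun n a => a • d2 n) ∈ K := aux_sum_mem p K c d2 hd2K
      have heq : (g + (x * (c.sum fun n a => a • d2 n) - c.sum fun n a => a • d1 n)
          - (g + (x * (c.sum fun n a => a • d2 n) - c.sum fun n a => a • d1 n)))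
          + x * 0 = 0 := by ring
      have hkey := aux_key K x hx
        (a := g - (c.sum fun n a => a • d1 n)
          - (g + (x * (c.sum fun n a => a • d2 n) - c.sum fun n a => a • d1 n)))
        (b := c.sum fun n a => a • d2 n)
        (K.sub_mem (K.sub_mem (hGK hg) hS1) hyK) hS2 (by ring)
      have hc : c = 0 := aux_indep p d1 d2 hindep c hkey.2
      simp only [hc, Finsupp.sum_zero_index, mul_zero, sub_zero, zero_sub, add_zero]
      simpa using hg
    · intro g hg
      exact ⟨Submodule.mem_sup_left hg, hGK hg⟩
  · intro g hg c h
    rw [aux_expand] at h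
    have hS1 : (c.sum fun n a => a • d1 n) ∈ K := aux_sum_mem p K c d1 hd1K
    have hS2 : (c.sum fun n a => a • d2 n) ∈ K := aux_sum_mem p K c d2 hd2K
    have hkey := aux_key K x hx (a := g - (c.sum fun n a => a • d1 n))
      (b := c.sum fun n a => a • d2 n)
      (K.sub_mem (hGK hg) hS1) hS2 (by linear_combination h)
    have hc : c = 0 := aux_indep p d1 d2 hindep c hkey.2
    refine ⟨?_, hc⟩
    have := hkey.1
    simp only [hc, Finsupp.sum_zero_index, sub_zero] at this
    exact this
end

section
/- Let ⫫ be a ternary relation satisfying right normality and right monotonicity, and let cl be a closure operator. Then the closure extension of the naive monotonisation implies the cl-monotonisation: (⫫^m)^c → ⫫^M. If ⫫ additionally satisfies right closure (A ⫫_C B → A ⫫_C cl(B∪C)), then (⫫^m)^c = ⫫^M. -/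
def NaiveMono {M : Type*} (Ind : Set M → Set M → Set M → Prop)
    (A C B : Set M) : Prop :=
  ∀ D : Set M, C ⊆ D → D ⊆ B ∪ C → Ind A D B

def ClMono {M : Type*} (cl : Set M → Set M) (Ind : Set M → Set M → Set M → Prop)
    (A C B : Set M) : Prop :=
  ∀ D : Set M, C ⊆ D → D ⊆ cl (B ∪ C) → Ind A D B

def ClExt {M : Type*} (cl : Set M → Set M) (Ind : Set M → Set M → Set M → Prop)
    (A C B : Set M) : Prop :=
  Ind A C (cl (B ∪ C))

theorem clExt_of_naiveMono_vs_clMono {M : Type*}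
    (cl : Set M → Set M)
    (hext : ∀ X, X ⊆ cl X)
    (hmono : ∀ X Y, X ⊆ Y → cl X ⊆ cl Y)
    (hidem : ∀ X, cl (cl X) = cl X)
    (Ind : Set M → Set M → Set M → Prop)
    (hnor : ∀ A C B, Ind A C B → Ind A C (B ∪ C))
    (hmon : ∀ (A C B B' : Set M), B ⊆ B' → Ind A C B' → Ind A C B) :
    (∀ A C B, ClExt cl (NaiveMono Ind) A C B → ClMono cl Ind A C B) ∧
    ((∀ A C B, Ind A C B → Ind A C (cl (B ∪ C))) →
      ∀ A C B, ClExt cl (NaiveMono Ind) A C B ↔ ClMono cl Ind A C B) := by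
  have fwd : ∀ A C B : Set M, ClExt cl (NaiveMono Ind) A C B → ClMono cl Ind A C B := by
    intro A C B h D hCD hDcl
    have h1 : Ind A D (cl (B ∪ C)) :=
      h D hCD (hDcl.trans Set.subset_union_left)
    exact hmon A D B (cl (B ∪ C)) ((Set.subset_union_left).trans (hext _)) h1
  refine ⟨fwd, fun hclo A C B => ⟨fwd A C B, ?_⟩⟩
  intro h D hCD hDcl
  have hDcl' : D ⊆ cl (B ∪ C) := by
    intro x hx
    rcases hDcl hx with h1 | h1
    · exact h1
    · exact hext _ (Or.inr h1)
  have hB : Ind A D B := h D hCD hDcl'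
  have h2 : Ind A D (cl (B ∪ D)) := hclo A D B hB
  exact hmon A D _ _ (hmono _ _ (Set.union_subset_union_right B hCD)) h2
end

section
/- Let ⫫ be a ternary relation on subsets of a set satisfying right normality, right monotonicity, and right base monotonicity. Then ⫫ = ⫫^m, i.e., ⫫ equals its own naive monotonisation. -/
theorem eq_naiveMono_of_nor_mon_bmon {M : Type*}
    (Ind : Set M → Set M → Set M → Prop)
    (hnor : ∀ A C B, Ind A C B → Ind A C (B ∪ C))
    (hmon : ∀ (A C B B' : Set M), B ⊆ B' → Ind A C B' → Ind A C B)
    (hbmon : ∀ (A C D B : Set M), C ⊆ D → D ⊆ B → Ind A C B → Ind A D B) :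
    ∀ A C B, Ind A C B ↔ NaiveMono Ind A C B := by
  intro A C B
  constructor
  · intro h D hCD hDBC
    exact hmon A D B (B ∪ C) Set.subset_union_left
      (hbmon A C D (B ∪ C) hCD hDBC (hnor A C B h))
  · intro h
    exact h C (subset_refl C) Set.subset_union_right
end

section
/- Let cl be a closure operator and ⫫ a ternary relation satisfying right monotonicity, right base monotonicity, right normality and right closure (A ⫫_C B → A ⫫_C cl(B∪C)). Then ⫫ = ⫫^M, where A ⫫^M_C B iff A ⫫_D B for all C ⊆ D ⊆ cl(B∪C). -/
theorem eq_clMono_of_mon_bmon_nor_clo {M : Type*}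
    (cl : Set M → Set M)
    (hext : ∀ X, X ⊆ cl X)
    (hmono : ∀ X Y, X ⊆ Y → cl X ⊆ cl Y)
    (hidem : ∀ X, cl (cl X) = cl X)
    (Ind : Set M → Set M → Set M → Prop)
    (hmon : ∀ (A C B B' : Set M), B ⊆ B' → Ind A C B' → Ind A C B)
    (hbmon : ∀ (A C D B : Set M), C ⊆ D → D ⊆ B → Ind A C B → Ind A D B)
    (hnor : ∀ A C B, Ind A C B → Ind A C (B ∪ C))
    (hclo : ∀ A C B, Ind A C B → Ind A C (cl (B ∪ C))) :
    ∀ A C B, Ind A C B ↔ ClMono cl Ind A C B := by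
  intro A C B
  constructor
  · intro h D hCD hDcl
    exact hmon A D B (cl (B ∪ C)) ((Set.subset_union_left).trans (hext _))
      (hbmon A C D (cl (B ∪ C)) hCD hDcl (hclo A C B h))
  · intro h
    exact h C (le_refl _) ((Set.subset_union_right).trans (hext _))
end
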